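/- arXiv:2402.16266 — 4 statements merged into one kernel-verified Lean document; each statement's English description precedes it below -/
import Mathlib

section
/- Let q be an odd positive integer and χ a Dirichlet character mod q with conductor c(χ). Define ρ_χ = (1/φ(q)) ∑_{v mod q, gcd(v,q)=1} χ(v−1) and α(q) = ∏_{ℓ | q} (1 − 1/(ℓ−1)). Then ρ_χ = 0 unless c(χ) is squarefree, in which case ρ_χ = (−1)^{ω(c(χ))} χ(−1) α(q) / ∏_{ℓ | c(χ)} (ℓ−2), where ω(m) denotes the number of distinct prime factors of m. -/
/-!
Writing `u = v - 1` and detecting `IsUnit (u + 1)` by Möbius inversion over the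
divisors of `q` turns `∑ χ(v - 1)` into `∑_{d ∣ q} μ(d) ∑_{u ≡ -1 (mod d)} χ(u)`.
The units `u ≡ -1 (mod d)` form a coset of the kernel of `(ℤ/q)ˣ → (ℤ/d)ˣ`, so the
inner sum is `χ(-1) φ(q)/φ(d)` if `χ` is trivial on that kernel, i.e. if `c(χ) ∣ d`,
and `0` otherwise. Hence `ρ_χ = χ(-1) ∑_{c(χ) ∣ d ∣ q} μ(d)/φ(d)`. Only squarefree `d`
contribute, so this vanishes unless `c(χ)` is squarefree, and then it is the Euler product
`∏_{ℓ ∣ c(χ)} (-1/(ℓ-1)) · ∏_{ℓ ∣ q, ℓ ∤ c(χ)} (1 - 1/(ℓ-1))`.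
-/

open Finset ArithmeticFunction
open scoped ArithmeticFunction.Moebius

theorem Fintype.sum_units_eq_sum_filter_isUnit {M R : Type*} [Monoid M] [Fintype M]
    [Fintype Mˣ] [DecidablePred (IsUnit : M → Prop)] [AddCommMonoid R] (F : M → R) :
    ∑ u : Mˣ, F u = ∑ x with IsUnit x, F x := by
  refine (sum_map univ ⟨Units.val, Units.val_injective⟩ F).symm.trans
    (congrArg (Finset.sum · F) ?_)
  ext x
  simp only [mem_map, mem_univ, true_and, mem_filter]
  rfl

open scoped Classical in
theorem MonoidHom.sum_fiber_eq_ite {G H R : Type*} [Group G] [Fintype G] [Group H]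
    [DecidableEq H] [CommRing R] [IsDomain R] (f : G →* H) (ψ : G →* Rˣ) (g₀ : G) :
    ∑ g with f g = f g₀, (ψ g : R) =
      if f.ker ≤ ψ.ker then (ψ g₀ : R) * Nat.card f.ker else 0 := by
  have hshift : ∑ g with f g = f g₀, (ψ g : R) = ψ g₀ * ∑ k : f.ker, (ψ k : R) := by
    rw [sum_filter, ← Equiv.sum_comp (Equiv.mulLeft g₀), mul_sum]
    simp only [Equiv.coe_mulLeft, map_mul, mul_eq_left, Units.val_mul]
    rw [← sum_filter]
    exact sum_subtype _ (fun k ↦ by simp) _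
  have htriv : (Units.coeHom R).comp (ψ.comp f.ker.subtype) = 1 ↔ f.ker ≤ ψ.ker := by
    rw [SetLike.le_def, DFunLike.ext_iff]
    simp only [MonoidHom.comp_apply, Units.coeHom_apply, MonoidHom.one_apply, Units.val_eq_one,
      Subgroup.coe_subtype, MonoidHom.mem_ker, Subtype.forall]
  have hker := sum_hom_units ((Units.coeHom R).comp (ψ.comp f.ker.subtype))
  simp only [MonoidHom.comp_apply, Units.coeHom_apply, Subgroup.coe_subtype, htriv] at hker
  rw [hshift, hker, Nat.card_eq_fintype_card]
  split_ifs <;> simp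

theorem Finset.sum_powerset_filter_superset_prod {ι R : Type*} [DecidableEq ι] [CommSemiring R]
    {s t : Finset ι} (hst : s ⊆ t) (f : ι → R) :
    ∑ A ∈ t.powerset with s ⊆ A, ∏ i ∈ A, f i = (∏ i ∈ s, f i) * ∏ i ∈ t \ s, (1 + f i) := by
  rw [prod_one_add, mul_sum]
  refine sum_nbij' (· \ s) (s ∪ ·) (fun A hA ↦ ?_) (fun B hB ↦ ?_) (fun A hA ↦ ?_)
    (fun B hB ↦ ?_) (fun A hA ↦ ?_)
  all_goals simp only [mem_filter, mem_powerset] at *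
  · exact sdiff_subset_sdiff hA.1 subset_rfl
  · exact ⟨union_subset hst (hB.trans sdiff_subset), subset_union_left⟩
  · exact union_sdiff_of_subset hA.2
  · exact union_sdiff_cancel_left (disjoint_of_subset_right hB disjoint_sdiff)
  · rw [← prod_sdiff hA.2, mul_comm]

theorem Nat.sum_divisors_moebius {R : Type*} [Ring R] (n : ℕ) :
    ∑ d ∈ n.divisors, (μ d : R) = if n = 1 then 1 else 0 := by
  rw [← one_apply, ← coe_moebius_mul_coe_zeta, coe_mul_zeta_apply]
  simp only [intCoe_apply]

theorem Nat.sum_divisors_filter_dvd_squarefree {M : Type*} [AddCommMonoid M] {n m : ℕ}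
    (hn : n ≠ 0) (hm : Squarefree m) (f : ℕ → M) :
    ∑ d ∈ n.divisors with m ∣ d ∧ Squarefree d, f d =
      ∑ A ∈ n.primeFactors.powerset with m.primeFactors ⊆ A, f (∏ p ∈ A, p) := by
  have hdvd {A} (hA : A ∈ n.primeFactors.powerset) : m ∣ ∏ p ∈ A, p ↔ m.primeFactors ⊆ A := by
    have hprime : ∀ p ∈ A, p.Prime := fun p hp ↦
      Nat.prime_of_mem_primeFactors (mem_powerset.mp hA hp)
    nth_rw 1 [← Nat.prod_primeFactors_of_squarefree hm]
    rw [Nat.prod_primeFactors_dvd_iff (prod_ne_zero_iff.mpr fun p hp ↦ (hprime p hp).ne_zero),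
      Nat.primeFactors_prod hprime]
  rw [← filter_filter, filter_comm, sum_filter, Nat.sum_divisors_filter_squarefree hn, sum_filter,
    Nat.factors_eq]
  refine sum_congr rfl fun A hA ↦ ?_
  rw [← Multiset.map_id' A.val, ← Finset.prod_eq_multiset_prod]
  exact if_congr (hdvd hA) rfl rfl

theorem Nat.totient_prod_of_prime {A : Finset ℕ} (hA : ∀ p ∈ A, p.Prime) :
    (∏ p ∈ A, p).totient = ∏ p ∈ A, (p - 1) := by
  have hφ : IsMultiplicative (⟨Nat.totient, Nat.totient_zero⟩ : ArithmeticFunction ℕ) :=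
    ⟨Nat.totient_one, Nat.totient_mul⟩
  exact (hφ.map_prod_of_prime A hA).trans
    (prod_congr rfl fun p hp ↦ Nat.totient_prime (hA p hp))

theorem ArithmeticFunction.moebius_div_totient_prod_of_prime {K : Type*} [Field K]
    {A : Finset ℕ} (hA : ∀ p ∈ A, p.Prime) :
    (μ (∏ p ∈ A, p) : K) / (∏ p ∈ A, p).totient = ∏ p ∈ A, (-1 / ((p : K) - 1)) := by
  rw [isMultiplicative_moebius.map_prod_of_prime A hA, Nat.totient_prod_of_prime hA,
    Int.cast_prod, Nat.cast_prod, ← prod_div_distrib]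
  refine prod_congr rfl fun p hp ↦ ?_
  rw [moebius_apply_prime (hA p hp), Nat.cast_sub (hA p hp).one_le]
  push_cast
  rfl

theorem Nat.sum_divisors_filter_dvd_moebius_div_totient {K : Type*} [Field K] {n m : ℕ}
    (hn : n ≠ 0) (hm : Squarefree m) (hmn : m ∣ n) :
    ∑ d ∈ n.divisors with m ∣ d, (μ d : K) / d.totient =
      (∏ p ∈ m.primeFactors, (-1 / ((p : K) - 1))) *
        ∏ p ∈ n.primeFactors \ m.primeFactors, (1 - 1 / ((p : K) - 1)) := by
  rw [← sum_filter_of_ne (p := Squarefree) fun d _ h ↦ ?_, filter_filter,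
    Nat.sum_divisors_filter_dvd_squarefree hn hm]
  · rw [sum_congr rfl fun A hA ↦ moebius_div_totient_prod_of_prime fun p hp ↦
      Nat.prime_of_mem_primeFactors (mem_powerset.mp (mem_filter.mp hA).1 hp),
      sum_powerset_filter_superset_prod (Nat.primeFactors_mono hmn hn)]
    simp only [neg_div, ← sub_eq_add_neg]
  · contrapose! h
    simp [moebius_eq_zero_of_not_squarefree h]

theorem Nat.sum_divisors_filter_dvd_moebius_div_totient_of_not_squarefree {K : Type*} [Field K]
    {n m : ℕ} (hm : ¬ Squarefree m) :
    ∑ d ∈ n.divisors with m ∣ d, (μ d : K) / d.totient = 0 :=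
  sum_eq_zero fun d hd ↦ by
    rw [moebius_eq_zero_of_not_squarefree fun h ↦ hm (h.squarefree_of_dvd (mem_filter.mp hd).2),
      Int.cast_zero, zero_div]

theorem prod_neg_one_div_sub_one_mul_prod_sdiff {K : Type*} [Field K] [CharZero K]
    {s t : Finset ℕ} (hst : s ⊆ t) (hs : ∀ p ∈ s, 2 < p) :
    (∏ p ∈ s, (-1 / ((p : K) - 1))) * ∏ p ∈ t \ s, (1 - 1 / ((p : K) - 1)) =
      (-1) ^ s.card * (∏ p ∈ t, (1 - 1 / ((p : K) - 1))) / ∏ p ∈ s, ((p : K) - 2) := by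
  have hterm : ∀ p ∈ s, -1 / ((p : K) - 1) = -1 * (1 - 1 / ((p : K) - 1)) / ((p : K) - 2) := by
    intro p hp
    have hp2 := hs p hp
    have h1 : (p : K) - 1 ≠ 0 := sub_ne_zero.mpr (by exact_mod_cast (by omega : p ≠ 1))
    have h2 : (p : K) - 2 ≠ 0 := sub_ne_zero.mpr (by exact_mod_cast (by omega : p ≠ 2))
    field_simp
    ring
  rw [prod_congr rfl hterm, prod_div_distrib, prod_mul_distrib, prod_const, ← prod_sdiff hst]
  ring

theorem Odd.two_lt_of_mem_primeFactors {n p : ℕ} (hn : Odd n) (hp : p ∈ n.primeFactors) :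
    2 < p := by
  have hp2 := (Nat.prime_of_mem_primeFactors hp).two_le
  have : p ≠ 2 := by
    rintro rfl
    exact hn.not_two_dvd_nat (Nat.dvd_of_mem_primeFactors hp)
  omega

theorem ZMod.ite_isUnit_eq_sum_moebius {R : Type*} [Ring R] {q : ℕ} [NeZero q] (x : ZMod q) :
    (if IsUnit x then 1 else 0 : R) = ∑ d ∈ q.divisors with d ∣ x.val, (μ d : R) := by
  have hdiv : {d ∈ q.divisors | d ∣ x.val} = (x.val.gcd q).divisors := by
    ext d
    simp only [mem_filter, Nat.mem_divisors, Nat.dvd_gcd_iff, ne_eq, Nat.gcd_eq_zero_iff,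
      NeZero.ne q, and_false, not_false_eq_true, and_true]
    tauto
  have hunit : IsUnit x ↔ x.val.gcd q = 1 := by
    rw [← Nat.coprime_iff_gcd_eq_one, ← ZMod.isUnit_iff_coprime, ZMod.natCast_zmod_val]
  rw [hdiv, Nat.sum_divisors_moebius]
  exact if_congr hunit rfl rfl

theorem ZMod.dvd_val_add_one_iff {q d : ℕ} [NeZero q] (hd : d ∣ q) (y : ZMod q) :
    d ∣ (y + 1).val ↔ (y.cast : ZMod d) = -1 := by
  rw [← ZMod.natCast_eq_zero_iff, ZMod.natCast_val, ZMod.cast_add hd, ZMod.cast_one hd,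
    add_eq_zero_iff_eq_neg]

theorem ZMod.unitsMap_neg_one {q d : ℕ} (hd : d ∣ q) : ZMod.unitsMap hd (-1) = -1 := by
  ext
  simp [ZMod.unitsMap_val, ZMod.cast_neg hd, ZMod.cast_one hd]

theorem ZMod.card_ker_unitsMap {q d : ℕ} [NeZero q] (hd : d ∣ q) :
    Nat.card (ZMod.unitsMap hd).ker = q.totient / d.totient := by
  have : NeZero d := ⟨fun h ↦ NeZero.ne q (Nat.eq_zero_of_zero_dvd (h ▸ hd))⟩
  have hcard := (ZMod.unitsMap hd).ker.card_mul_index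
  rw [Subgroup.index_ker, MonoidHom.range_eq_top.mpr (ZMod.unitsMap_surjective hd),
    Subgroup.card_top, Nat.card_eq_fintype_card (α := (ZMod d)ˣ),
    Nat.card_eq_fintype_card (α := (ZMod q)ˣ), ZMod.card_units_eq_totient,
    ZMod.card_units_eq_totient] at hcard
  exact (Nat.div_eq_of_eq_mul_left (Nat.totient_pos.mpr (Nat.pos_of_ne_zero (NeZero.ne d)))
    hcard.symm).symm

theorem DirichletCharacter.ker_unitsMap_le_iff_conductor_dvd {R : Type*} [CommMonoidWithZero R]
    {q d : ℕ} [NeZero q] (χ : DirichletCharacter R q) (hd : d ∣ q) :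
    (ZMod.unitsMap hd).ker ≤ χ.toUnitHom.ker ↔ χ.conductor ∣ d :=
  (factorsThrough_iff_ker_unitsMap hd).symm.trans (χ.mem_conductorSet_iff_conductor_dvd hd)

theorem DirichletCharacter.sum_cast_eq_neg_one {R : Type*} [CommRing R] [IsDomain R]
    {q d : ℕ} [NeZero q] (χ : DirichletCharacter R q) (hd : d ∣ q) :
    ∑ x : ZMod q with (x.cast : ZMod d) = -1, χ x =
      if χ.conductor ∣ d then χ (-1) * ((q.totient / d.totient : ℕ) : R) else 0 := by
  have hfiber (u : (ZMod q)ˣ) :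
      ((u : ZMod q).cast : ZMod d) = -1 ↔ ZMod.unitsMap hd u = ZMod.unitsMap hd (-1) := by
    rw [ZMod.unitsMap_neg_one, Units.ext_iff, ZMod.unitsMap_val, Units.val_neg, Units.val_one]
  have hunits : ∑ u with ZMod.unitsMap hd u = ZMod.unitsMap hd (-1), (χ.toUnitHom u : R) =
      ∑ x : ZMod q with (x.cast : ZMod d) = -1, χ x := by
    calc _ = ∑ u : (ZMod q)ˣ, if ((u : ZMod q).cast : ZMod d) = -1 then χ u else 0 := by
          rw [sum_filter]
          exact sum_congr rfl fun u _ ↦ by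
            rw [MulChar.coe_toUnitHom, if_congr (hfiber u) rfl rfl]
      _ = ∑ x with IsUnit x, if (x.cast : ZMod d) = -1 then χ x else 0 :=
          Fintype.sum_units_eq_sum_filter_isUnit fun x ↦
            if (x.cast : ZMod d) = -1 then χ x else 0
      _ = _ := by
          rw [sum_filter_of_ne fun x _ hx ↦ ?_, sum_filter]
          by_contra hu
          simp [χ.map_nonunit hu] at hx
  classical
  rw [← hunits, MonoidHom.sum_fiber_eq_ite, MulChar.coe_toUnitHom, Units.val_neg, Units.val_one,
    ZMod.card_ker_unitsMap hd]
  exact if_congr (χ.ker_unitsMap_le_iff_conductor_dvd hd) rfl rfl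

theorem DirichletCharacter.sum_units_sub_one {K : Type*} [Field K] [CharZero K] {q : ℕ}
    [NeZero q] (χ : DirichletCharacter K q) :
    ∑ v : (ZMod q)ˣ, χ (v - 1) =
      χ (-1) * q.totient * ∑ d ∈ q.divisors with χ.conductor ∣ d, (μ d : K) / d.totient := by
  calc ∑ v : (ZMod q)ˣ, χ (v - 1)
      = ∑ x, if IsUnit x then χ (x - 1) else 0 := by
        rw [Fintype.sum_units_eq_sum_filter_isUnit fun x ↦ χ (x - 1), sum_filter]
    _ = ∑ y, χ y * if IsUnit (y + 1) then 1 else 0 := by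
        rw [← Equiv.sum_comp (Equiv.addRight 1)]
        simp only [Equiv.coe_addRight, add_sub_cancel_right, mul_ite, mul_one, mul_zero]
    _ = ∑ d ∈ q.divisors, (μ d : K) * ∑ y : ZMod q with (y.cast : ZMod d) = -1, χ y := by
        simp_rw [ZMod.ite_isUnit_eq_sum_moebius, mul_sum, sum_filter]
        rw [sum_comm]
        refine sum_congr rfl fun d hd ↦ sum_congr rfl fun y _ ↦ ?_
        rw [if_congr (ZMod.dvd_val_add_one_iff (Nat.dvd_of_mem_divisors hd) y)
          (mul_comm _ _) rfl]
    _ = _ := by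
        rw [sum_filter, mul_sum]
        refine sum_congr rfl fun d hd ↦ ?_
        have hdq := Nat.dvd_of_mem_divisors hd
        have hφd : (d.totient : K) ≠ 0 :=
          Nat.cast_ne_zero.mpr (Nat.totient_pos.mpr (Nat.pos_of_mem_divisors hd)).ne'
        rw [χ.sum_cast_eq_neg_one hdq, Nat.cast_div (Nat.totient_dvd_of_dvd hdq) hφd]
        split_ifs
        · field_simp
        · simp

theorem stmt_3_general (q : ℕ) (hodd : Odd q) [NeZero q]
    (χ : DirichletCharacter ℂ q) :
    (¬ Squarefree χ.conductor →
      (1 / (Nat.totient q : ℂ)) * ∑ v : (ZMod q)ˣ, χ ((v : ZMod q) - 1) = 0) ∧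
    (Squarefree χ.conductor →
      (1 / (Nat.totient q : ℂ)) * ∑ v : (ZMod q)ˣ, χ ((v : ZMod q) - 1) =
        (-1) ^ (χ.conductor.primeFactors.card) * χ (-1) *
          (∏ ℓ ∈ q.primeFactors, (1 - 1 / ((ℓ : ℂ) - 1))) /
          ∏ ℓ ∈ χ.conductor.primeFactors, ((ℓ : ℂ) - 2)) := by
  have hφq : (q.totient : ℂ) ≠ 0 :=
    Nat.cast_ne_zero.mpr (Nat.totient_pos.mpr (NeZero.pos q)).ne'
  have hρ : (1 / (q.totient : ℂ)) * ∑ v : (ZMod q)ˣ, χ ((v : ZMod q) - 1) =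
      χ (-1) * ∑ d ∈ q.divisors with χ.conductor ∣ d, (μ d : ℂ) / d.totient := by
    rw [χ.sum_units_sub_one]
    field_simp
  have hPcq := Nat.primeFactors_mono χ.conductor_dvd_level (NeZero.ne q)
  refine ⟨fun hc ↦ ?_, fun hc ↦ ?_⟩
  · rw [hρ, Nat.sum_divisors_filter_dvd_moebius_div_totient_of_not_squarefree hc, mul_zero]
  · rw [hρ,
      Nat.sum_divisors_filter_dvd_moebius_div_totient (NeZero.ne q) hc χ.conductor_dvd_level,
      prod_neg_one_div_sub_one_mul_prod_sdiff hPcq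
        fun p hp ↦ hodd.two_lt_of_mem_primeFactors (hPcq hp)]
    ring

/-- For odd `q` and a Dirichlet character `χ` mod `q` with conductor `c(χ)`, the average
`ρ_χ = φ(q)⁻¹ ∑_{(v,q)=1} χ(v-1)` vanishes unless `c(χ)` is squarefree, in which case
`ρ_χ = (-1)^{ω(c(χ))} χ(-1) α(q) / ∏_{ℓ ∣ c(χ)} (ℓ-2)`, where
`α(q) = ∏_{ℓ ∣ q} (1 - 1/(ℓ-1))`. -/
theorem stmt_3 (q : ℕ) (hq : 0 < q) (hodd : Odd q) [NeZero q]
    (χ : DirichletCharacter ℂ q) :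
    (¬ Squarefree χ.conductor →
      (1 / (Nat.totient q : ℂ)) * ∑ v : (ZMod q)ˣ, χ ((v : ZMod q) - 1) = 0) ∧
    (Squarefree χ.conductor →
      (1 / (Nat.totient q : ℂ)) * ∑ v : (ZMod q)ˣ, χ ((v : ZMod q) - 1) =
        (-1) ^ (χ.conductor.primeFactors.card) * χ (-1) *
          (∏ ℓ ∈ q.primeFactors, (1 - 1 / ((ℓ : ℂ) - 1))) /
          ∏ ℓ ∈ χ.conductor.primeFactors, ((ℓ : ℂ) - 2)) :=
  stmt_3_general q hodd χ
end

section
/- Let q be an odd positive integer, α(q) = ∏_{ℓ | q} (1 − 1/(ℓ−1)), and for each Dirichlet character χ mod q set ρ_χ = (1/φ(q)) ∑_{v mod q, gcd(v,q)=1} χ(v−1). Then ∑_{χ mod q} |ρ_χ|² ≤ α(q). -/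
/-!
Expanding the square and using the orthogonality of Dirichlet characters, `∑_χ |∑_v χ(v - 1)|²`
is `φ(q)` times the number of exceptional units of `ZMod q`, i.e. units `v` with `1 - v` also a
unit. By the Chinese remainder theorem this count is multiplicative. In the local ring
`ZMod (p ^ k)` every `x` has `x` or `1 - x` a unit, so inclusion–exclusion gives
`2 φ(p ^ k) - p ^ k = p ^ (k - 1) (p - 2)` exceptional units. Hence
`∑_χ |ρ_χ|² = ∏_{p ∣ q} (p - 2) / (p - 1) = α(q)`, with equality.
-/

open Finset

namespace DirichletCharacter

lemma sum_apply_mul_star_apply {n : ℕ} [NeZero n] (a b : ZMod n) :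
    ∑ χ : DirichletCharacter ℂ n, χ a * star (χ b) =
      if a = b ∧ IsUnit b then (n.totient : ℂ) else 0 := by
  by_cases hb : IsUnit b
  · simp only [MulChar.star_apply', MulChar.inv_apply, ← map_mul, sum_characters_eq, hb,
      and_true]
    have : a * Ring.inverse b = 1 ↔ a = b := by
      rw [eq_comm, Ring.eq_mul_inverse_iff_mul_eq _ _ _ hb, one_mul, eq_comm]
    simp only [this]
  · simp [MulChar.map_nonunit _ hb, hb]

lemma sum_norm_sq_sum_apply {n : ℕ} [NeZero n] {ι : Type*} [Fintype ι]
    {g : ι → ZMod n} (hg : Function.Injective g) :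
    ∑ χ : DirichletCharacter ℂ n, ‖∑ i, χ (g i)‖ ^ 2 = n.totient * #{i | IsUnit (g i)} := by
  classical
  suffices ∑ χ : DirichletCharacter ℂ n, ((‖∑ i, χ (g i)‖ ^ 2 : ℝ) : ℂ) =
      n.totient * #{i | IsUnit (g i)} by exact_mod_cast this
  calc ∑ χ : DirichletCharacter ℂ n, ((‖∑ i, χ (g i)‖ ^ 2 : ℝ) : ℂ)
      = ∑ i, ∑ j, ∑ χ : DirichletCharacter ℂ n, χ (g i) * star (χ (g j)) := by
        simp_rw [Complex.ofReal_pow, ← Complex.mul_conj', map_sum, sum_mul_sum,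
          ← Complex.star_def]
        rw [sum_comm]
        exact sum_congr rfl fun i _ => sum_comm
    _ = ∑ i, if IsUnit (g i) then (n.totient : ℂ) else 0 := by
        simp only [sum_apply_mul_star_apply, hg.eq_iff, ite_and, sum_ite_eq, mem_univ, if_true]
    _ = n.totient * #{i | IsUnit (g i)} := by
        rw [sum_ite, sum_const_zero, add_zero, sum_const, nsmul_eq_mul, mul_comm]

end DirichletCharacter

def exceptionalUnits (R : Type*) [Ring R] : Set R := {x | IsUnit x ∧ IsUnit (1 - x)}

section ExceptionalUnits

variable {R S : Type*} [Ring R] [Ring S]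

lemma card_exceptionalUnits_congr (e : R ≃+* S) :
    Nat.card (exceptionalUnits R) = Nat.card (exceptionalUnits S) :=
  Nat.card_congr <| e.toEquiv.subtypeEquiv fun x => by
    change IsUnit x ∧ IsUnit (1 - x) ↔ IsUnit (e x) ∧ IsUnit (1 - e x)
    rw [← map_one e, ← map_sub, isUnit_map_iff, isUnit_map_iff]

lemma card_exceptionalUnits_prod :
    Nat.card (exceptionalUnits (R × S)) =
      Nat.card (exceptionalUnits R) * Nat.card (exceptionalUnits S) := by
  rw [← Nat.card_prod]
  refine Nat.card_congr <| (Equiv.subtypeEquivRight fun x => ?_).trans Equiv.subtypeProdEquivProd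
  simp only [exceptionalUnits, Set.mem_ofPred_eq, Prod.isUnit_iff, Prod.fst_sub, Prod.snd_sub,
    Prod.fst_one, Prod.snd_one]
  tauto

lemma card_units_isUnit_sub_one :
    Nat.card {u : Rˣ // IsUnit ((u : R) - 1)} = Nat.card (exceptionalUnits R) := by
  refine Nat.card_congr
    { toFun := fun u => ⟨(u.1 : R), u.1.isUnit, by rw [← neg_sub, IsUnit.neg_iff]; exact u.2⟩
      invFun := fun x =>
        ⟨x.2.1.unit, by rw [IsUnit.unit_spec, ← neg_sub, IsUnit.neg_iff]; exact x.2.2⟩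
      left_inv := fun u => Subtype.ext (Units.ext (IsUnit.unit_spec _))
      right_inv := fun x => Subtype.ext x.2.1.unit_spec }

end ExceptionalUnits

lemma IsLocalRing.card_exceptionalUnits_add_card {R : Type*} [CommRing R] [IsLocalRing R]
    [Finite R] :
    Nat.card (exceptionalUnits R) + Nat.card R = 2 * Nat.card Rˣ := by
  have hunits : Nat.card Rˣ = {x : R | IsUnit x}.ncard :=
    (Nat.card_congr Submonoid.unitsTypeEquivIsUnitSubmonoid.toEquiv).trans
      (Nat.card_coe_set_eq _)
  have hshift : {x : R | IsUnit (1 - x)}.ncard = {x : R | IsUnit x}.ncard := by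
    rw [← Nat.card_coe_set_eq, ← Nat.card_coe_set_eq]
    exact Nat.card_congr ((Equiv.subLeft 1).subtypeEquiv fun _ => Iff.rfl)
  have hcover : {x : R | IsUnit x} ∪ {x | IsUnit (1 - x)} = Set.univ :=
    Set.eq_univ_of_forall fun x => isUnit_or_isUnit_one_sub_self x
  rw [Nat.card_coe_set_eq, ← Set.ncard_univ, ← hcover, hunits, two_mul]
  nth_rewrite 2 [← hshift]
  rw [add_comm]
  exact Set.ncard_union_add_ncard_inter _ _

namespace ZMod

lemma isUnit_iff_castHom_ne_zero {p k : ℕ} (hp : p.Prime) (hk : k ≠ 0)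
    (x : ZMod (p ^ k)) : IsUnit x ↔ castHom (dvd_pow_self p hk) (ZMod p) x ≠ 0 := by
  have : NeZero (p ^ k) := ⟨pow_ne_zero _ hp.ne_zero⟩
  rw [← natCast_zmod_val x, map_natCast, isUnit_natCast_iff_not_dvd_pow hp (Nat.pos_of_ne_zero hk),
    ne_eq, natCast_eq_zero_iff]

lemma isLocalRing_prime_pow {p k : ℕ} (hp : p.Prime) (hk : k ≠ 0) :
    IsLocalRing (ZMod (p ^ k)) := by
  have : Nontrivial (ZMod (p ^ k)) :=
    nontrivial_iff.mpr (Nat.one_lt_pow hk hp.one_lt).ne'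
  have : Fact p.Prime := ⟨hp⟩
  refine .of_isUnit_or_isUnit_one_sub_self fun a => ?_
  simp only [isUnit_iff_castHom_ne_zero hp hk, map_sub, map_one]
  by_contra! h
  simp [h.1] at h

lemma card_exceptionalUnits_prime_pow {p k : ℕ} (hp : p.Prime) (hk : k ≠ 0) :
    Nat.card (exceptionalUnits (ZMod (p ^ k))) = p ^ (k - 1) * (p - 2) := by
  have : NeZero (p ^ k) := ⟨pow_ne_zero _ hp.ne_zero⟩
  have := (isLocalRing_prime_pow hp hk).card_exceptionalUnits_add_card
  rw [Nat.card_zmod, Nat.card_eq_fintype_card (α := (ZMod _)ˣ), card_units_eq_totient,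
    Nat.totient_prime_pow hp (Nat.pos_of_ne_zero hk)] at this
  obtain ⟨k, rfl⟩ := Nat.exists_eq_succ_of_ne_zero hk
  obtain ⟨r, rfl⟩ := Nat.exists_eq_add_of_le' hp.two_le
  simp only [Nat.succ_sub_one, Nat.add_sub_cancel, pow_succ] at this ⊢
  linarith

lemma card_exceptionalUnits_mul {m n : ℕ} (h : m.Coprime n) :
    Nat.card (exceptionalUnits (ZMod (m * n))) =
      Nat.card (exceptionalUnits (ZMod m)) * Nat.card (exceptionalUnits (ZMod n)) :=
  (card_exceptionalUnits_congr (chineseRemainder h)).trans card_exceptionalUnits_prod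

lemma card_exceptionalUnits_eq_prod_factorization {n : ℕ} (hn : n ≠ 0) :
    Nat.card (exceptionalUnits (ZMod n)) =
      n.factorization.prod fun p k => p ^ (k - 1) * (p - 2) := by
  have hone : Nat.card (exceptionalUnits (ZMod 1)) = 1 :=
    Nat.card_of_subsingleton
      (⟨0, isUnit_of_subsingleton _, isUnit_of_subsingleton _⟩ : exceptionalUnits (ZMod 1))
  rw [Nat.multiplicative_factorization (fun n => Nat.card (exceptionalUnits (ZMod n)))
    (fun _ _ => card_exceptionalUnits_mul) hone hn]
  refine Finsupp.prod_congr fun p hp => ?_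
  exact card_exceptionalUnits_prime_pow (Nat.prime_of_mem_primeFactors hp)
    (Finsupp.mem_support_iff.mp hp)

lemma card_exceptionalUnits_div_totient {n : ℕ} (hn : n ≠ 0) :
    (Nat.card (exceptionalUnits (ZMod n)) : ℝ) / n.totient =
      ∏ p ∈ n.primeFactors, (1 - 1 / ((p : ℝ) - 1)) := by
  rw [card_exceptionalUnits_eq_prod_factorization hn, Nat.totient_eq_prod_factorization hn,
    Finsupp.prod, Finsupp.prod, Nat.support_factorization, Nat.cast_prod, Nat.cast_prod,
    ← prod_div_distrib]
  refine prod_congr rfl fun p hp => ?_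
  have h2 : 2 ≤ p := (Nat.prime_of_mem_primeFactors hp).two_le
  have h2' : (2 : ℝ) ≤ p := by exact_mod_cast h2
  have : ((p : ℝ) - 1) ≠ 0 := by linarith
  push_cast [Nat.cast_sub h2, Nat.cast_sub (one_le_two.trans h2)]
  field_simp
  ring

end ZMod

theorem stmt_4_general (q : ℕ) [NeZero q] :
    ∑ χ : DirichletCharacter ℂ q,
        ‖(1 / (Nat.totient q : ℂ)) * ∑ v : (ZMod q)ˣ, χ ((v : ZMod q) - 1)‖ ^ 2 ≤
      ∏ ℓ ∈ q.primeFactors, (1 - 1 / ((ℓ : ℝ) - 1)) := by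
  have hinj : Function.Injective fun v : (ZMod q)ˣ => (v : ZMod q) - 1 :=
    fun u v h => Units.ext (sub_left_injective h)
  have hφ : (q.totient : ℝ) ≠ 0 := by exact_mod_cast (Nat.totient_pos.mpr (NeZero.pos q)).ne'
  apply le_of_eq
  calc ∑ χ : DirichletCharacter ℂ q,
        ‖(1 / (Nat.totient q : ℂ)) * ∑ v : (ZMod q)ˣ, χ ((v : ZMod q) - 1)‖ ^ 2
      = (1 / (q.totient : ℝ)) ^ 2 *
          ∑ χ : DirichletCharacter ℂ q, ‖∑ v : (ZMod q)ˣ, χ ((v : ZMod q) - 1)‖ ^ 2 := by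
        rw [mul_sum]
        refine sum_congr rfl fun χ _ => ?_
        rw [norm_mul, mul_pow, norm_div, norm_one, Complex.norm_natCast]
    _ = (Nat.card (exceptionalUnits (ZMod q)) : ℝ) / q.totient := by
        rw [DirichletCharacter.sum_norm_sq_sum_apply hinj, ← card_units_isUnit_sub_one,
          Nat.card_eq_fintype_card, Fintype.card_subtype]
        field_simp
    _ = ∏ ℓ ∈ q.primeFactors, (1 - 1 / ((ℓ : ℝ) - 1)) :=
        ZMod.card_exceptionalUnits_div_totient (NeZero.ne q)

/-- For odd `q`, with `ρ_χ = φ(q)⁻¹ ∑_{(v,q)=1} χ(v-1)`, one has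
`∑_{χ mod q} |ρ_χ|² ≤ α(q) = ∏_{ℓ ∣ q} (1 - 1/(ℓ-1))`. -/
theorem stmt_4 (q : ℕ) (hq : 0 < q) (hodd : Odd q) [NeZero q] :
    ∑ χ : DirichletCharacter ℂ q,
        ‖(1 / (Nat.totient q : ℂ)) * ∑ v : (ZMod q)ˣ, χ ((v : ZMod q) - 1)‖ ^ 2 ≤
      ∏ ℓ ∈ q.primeFactors, (1 - 1 / ((ℓ : ℝ) - 1)) :=
  stmt_4_general q
end

section
/- Let x ≥ 4 and let q be a positive integer with 3 | q and q odd. Then 3·#{n ≤ x : gcd(φ(n), q) = 1 and φ(n) ≡ a (mod 3)} ≥ #{n ≤ x/4 : gcd(φ(n), q) = 1}, for any residue a coprime to 3. -/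
/-!
Every `n` with `φ(n)` coprime to `q` has `φ(n) ≢ 0 (mod 3)`, so `φ(n) ≡ ±a`. If `φ(n) ≡ -a`,
then `4n` (for odd `n`) or `2n` (for even `n`) has totient `2φ(n) ≡ a`, still coprime to
the odd `q`. Hence the three injections `n ↦ n, 2n, 4n` cover the `n ≤ x/4` by the
counted set.
-/

open Finset
open scoped Nat

lemma ZMod.three_eq_or_eq_neg {a z : ZMod 3} (ha : IsUnit a) (hz : z ≠ 0) : z = a ∨ z = -a := by
  revert a z; decide

lemma Nat.totient_four_mul_of_odd {n : ℕ} (hn : Odd n) : φ (4 * n) = 2 * φ n := by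
  rw [show 4 * n = 2 * (2 * n) by ring, Nat.totient_two_mul_of_even (even_two_mul n),
    Nat.totient_two_mul_of_odd hn]

lemma card_filter_mul_mem_le (s t : Finset ℕ) {c : ℕ} (hc : c ≠ 0) :
    #{n ∈ s | c * n ∈ t} ≤ #t :=
  card_le_card_of_injOn (c * ·) (fun _ hn ↦ (mem_filter.1 hn).2)
    (mul_right_injective₀ hc).injOn

section TotientModThree

variable {q : ℕ} (h3 : 3 ∣ q) (hodd : Odd q) {a : ZMod 3} (ha : IsUnit a)

include h3 in
lemma natCast_totient_ne_zero_of_coprime {n : ℕ} (hn : (φ n).Coprime q) :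
    (φ n : ZMod 3) ≠ 0 := by
  rw [Ne, ZMod.natCast_eq_zero_iff]
  intro h
  have : 3 ∣ 1 := hn ▸ Nat.dvd_gcd h h3
  omega

include hodd in
lemma coprime_two_mul_totient {n : ℕ} (hn : (φ n).Coprime q) : (2 * φ n).Coprime q :=
  (Nat.coprime_two_left.mpr hodd).mul_left hn

include h3 hodd ha in
lemma exists_mem_totient_mul_eq {n : ℕ} (hn : (φ n).Coprime q) :
    ∃ c ∈ ({1, 2, 4} : Finset ℕ), (φ (c * n)).Coprime q ∧ (φ (c * n) : ZMod 3) = a := by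
  have h2 : (2 : ZMod 3) = -1 := by decide
  rcases ZMod.three_eq_or_eq_neg ha (natCast_totient_ne_zero_of_coprime h3 hn) with h | h
  · exact ⟨1, by simp, by simpa using hn, by simpa using h⟩
  · rcases Nat.even_or_odd n with hev | hod
    · refine ⟨2, by simp, ?_, ?_⟩ <;> rw [Nat.totient_two_mul_of_even hev]
      · exact coprime_two_mul_totient hodd hn
      · push_cast; rw [h, h2]; ring
    · refine ⟨4, by simp, ?_, ?_⟩ <;> rw [Nat.totient_four_mul_of_odd hod]
      · exact coprime_two_mul_totient hodd hn
      · push_cast; rw [h, h2]; ring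

include h3 hodd ha in
lemma card_filter_coprime_totient_le {N M : ℕ} (hNM : 4 * N ≤ M) :
    #{n ∈ Icc 1 N | (φ n).Coprime q} ≤
      3 * #{n ∈ Icc 1 M | (φ n).Coprime q ∧ (φ n : ZMod 3) = a} := by
  set T := {n ∈ Icc 1 M | (φ n).Coprime q ∧ (φ n : ZMod 3) = a}
  have hcover : {n ∈ Icc 1 N | (φ n).Coprime q} ⊆
      ({1, 2, 4} : Finset ℕ).biUnion fun c ↦ {n ∈ Icc 1 N | c * n ∈ T} := by
    intro n hn
    obtain ⟨hnN, hcop⟩ := mem_filter.1 hn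
    obtain ⟨c, hc, hgood⟩ := exists_mem_totient_mul_eq h3 hodd ha hcop
    have hc14 : 1 ≤ c ∧ c ≤ 4 := by simp only [mem_insert, mem_singleton] at hc; omega
    have hcn : c * n ∈ Icc 1 M := by
      rw [mem_Icc] at hnN ⊢
      constructor <;> nlinarith
    exact mem_biUnion.2 ⟨c, hc, mem_filter.2 ⟨hnN, mem_filter.2 ⟨hcn, hgood⟩⟩⟩
  calc #{n ∈ Icc 1 N | (φ n).Coprime q}
      ≤ #(({1, 2, 4} : Finset ℕ).biUnion fun c ↦ {n ∈ Icc 1 N | c * n ∈ T}) :=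
        card_le_card hcover
    _ ≤ #({1, 2, 4} : Finset ℕ) * #T :=
        card_biUnion_le_card_mul _ _ _ fun c hc ↦
          card_filter_mul_mem_le _ _ (by rintro rfl; simp at hc)
    _ = 3 * #T := rfl

end TotientModThree

theorem stmt_13_general (x : ℝ) (q : ℕ) (h3 : 3 ∣ q) (hodd : Odd q)
    (a : ZMod 3) (ha : IsUnit a) :
    ((Finset.Icc 1 ⌊x / 4⌋₊).filter (fun n : ℕ => Nat.gcd (Nat.totient n) q = 1)).card ≤
      3 * ((Finset.Icc 1 ⌊x⌋₊).filter
        (fun n : ℕ => Nat.gcd (Nat.totient n) q = 1 ∧ ((Nat.totient n : ZMod 3) = a))).card := by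
  have hfloor : 4 * ⌊x / 4⌋₊ ≤ ⌊x⌋₊ := by
    rw [Nat.floor_div_ofNat]
    exact Nat.mul_div_le _ _
  exact card_filter_coprime_totient_le h3 hodd ha hfloor

/-- For `x ≥ 4`, odd `q` divisible by 3, and any residue `a` coprime to 3,
`3·#{n ≤ x : (φ(n),q)=1, φ(n) ≡ a (mod 3)} ≥ #{n ≤ x/4 : (φ(n),q)=1}`. -/
theorem stmt_13 (x : ℝ) (hx : 4 ≤ x) (q : ℕ) (hq : 0 < q) (h3 : 3 ∣ q) (hodd : Odd q)
    (a : ZMod 3) (ha : IsUnit a) :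
    ((Finset.Icc 1 ⌊x / 4⌋₊).filter (fun n : ℕ => Nat.gcd (Nat.totient n) q = 1)).card ≤
      3 * ((Finset.Icc 1 ⌊x⌋₊).filter
        (fun n : ℕ => Nat.gcd (Nat.totient n) q = 1 ∧ ((Nat.totient n : ZMod 3) = a))).card :=
  stmt_13_general x q h3 hodd a ha
end

section
/- For all x ≥ 3 and z = x^{1/log log x}, the number Ψ(x, z) of z-smooth integers up to x satisfies Ψ(x, z) ≪ x/(log x)^{(1+o(1)) log log log x} as x → ∞. -/
/-!
Rankin's trick: for `1/2 ≤ σ ≤ 1`, `Ψ(x, z) ≤ x^σ ∑ n^{-σ}` over `z`-smooth `n`, and the Euler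
product bounds this by `x^σ ∏_{p ≤ z} (1 - p^{-σ})⁻¹ ≤ x^σ exp (4 ∑_{p ≤ z} p^{-σ})`.
The primorial bound `∏_{p ≤ n} p ≤ 4^n` leaves at most `2^{j+2}/j` primes in `[2^j, 2^{j+1})`,
so summing over dyadic blocks gives `∑_{p ≤ z} p^{-σ} ≤ 4 (z^{1-σ} + log log₂ z)`.
With `u = log log x`, `z = x^{1/u}` and `σ = 1 - log u / log z` one has `z^{1-σ} = u` and
`x^σ = x / (log x)^{log u}`, whence `Ψ(x, z) ≤ x / (log x)^{log u - 32}`.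
-/

open Real Filter Finset

noncomputable def natRpowHom (s : ℝ) : ℕ →* ℝ where
  toFun n := (n : ℝ) ^ s
  map_one' := by simp
  map_mul' m n := by push_cast; exact mul_rpow m.cast_nonneg n.cast_nonneg

theorem sum_rpow_neg_le_prod_primesBelow {σ : ℝ} (hσ : 0 < σ) {N : ℕ} {S : Finset ℕ}
    (hS : ∀ n ∈ S, n ∈ N.smoothNumbers) :
    ∑ n ∈ S, (n : ℝ) ^ (-σ) ≤ ∏ p ∈ N.primesBelow, (1 - (p : ℝ) ^ (-σ))⁻¹ := by
  have hlt {p : ℕ} (hp : p.Prime) : ‖natRpowHom (-σ) p‖ < 1 := by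
    change ‖(p : ℝ) ^ (-σ)‖ < 1
    rw [Real.norm_of_nonneg (rpow_nonneg p.cast_nonneg _)]
    exact rpow_lt_one_of_one_lt_of_neg (by exact_mod_cast hp.one_lt) (neg_neg_of_pos hσ)
  have hsum := hasSum_subtype_iff_indicator.mp
    (EulerProduct.summable_and_hasSum_smoothNumbers_prod_primesBelow_geometric hlt N).2
  calc ∑ n ∈ S, (n : ℝ) ^ (-σ) = ∑ n ∈ S, N.smoothNumbers.indicator (natRpowHom (-σ)) n :=
        sum_congr rfl fun n hn => (Set.indicator_of_mem (hS n hn) (natRpowHom (-σ))).symm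
    _ ≤ _ := sum_le_hasSum S
        (fun n _ => Set.indicator_nonneg (fun n _ => rpow_nonneg n.cast_nonneg _) n) hsum

theorem card_le_rpow_mul_sum_rpow_neg {x σ : ℝ} (hσ : 0 ≤ σ) {S : Finset ℕ}
    (hS : ∀ n ∈ S, 0 < n ∧ (n : ℝ) ≤ x) :
    (#S : ℝ) ≤ x ^ σ * ∑ n ∈ S, (n : ℝ) ^ (-σ) := by
  rw [card_eq_sum_ones, Nat.cast_sum, mul_sum]
  refine sum_le_sum fun n hn => ?_
  obtain ⟨hn0, hnx⟩ := hS n hn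
  have hn0 : (0 : ℝ) < n := by exact_mod_cast hn0
  rw [rpow_neg hn0.le, ← div_eq_mul_inv, Nat.cast_one, one_le_div (rpow_pos_of_pos hn0 σ)]
  exact rpow_le_rpow hn0.le hnx hσ

theorem inv_one_sub_le_exp {t : ℝ} (h0 : 0 ≤ t) (h1 : t ≤ 3 / 4) :
    (1 - t)⁻¹ ≤ exp (4 * t) :=
  calc (1 - t)⁻¹ ≤ 1 + 4 * t := by rw [inv_le_iff_one_le_mul₀' (by linarith)]; nlinarith
    _ ≤ exp (4 * t) := by linarith [add_one_le_exp (4 * t)]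

theorem prod_inv_one_sub_le_exp_sum {ι : Type*} {s : Finset ι} {t : ι → ℝ}
    (h0 : ∀ i ∈ s, 0 ≤ t i) (h1 : ∀ i ∈ s, t i ≤ 3 / 4) :
    ∏ i ∈ s, (1 - t i)⁻¹ ≤ exp (4 * ∑ i ∈ s, t i) := by
  rw [mul_sum, exp_sum]
  exact prod_le_prod (fun i hi => inv_nonneg.mpr (by linarith [h1 i hi]))
    fun i hi => inv_one_sub_le_exp (h0 i hi) (h1 i hi)

theorem pow_card_le_four_pow {a n : ℕ} {Q : Finset ℕ} (hQ : ∀ p ∈ Q, p.Prime ∧ a ≤ p ∧ p ≤ n) :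
    a ^ #Q ≤ 4 ^ n :=
  calc a ^ #Q ≤ ∏ p ∈ Q, p := pow_card_le_prod _ _ _ fun p hp => (hQ p hp).2.1
    _ ≤ ∏ p ∈ Nat.primesLE n, p :=
      prod_le_prod_of_subset_of_one_le'
        (fun p hp => Nat.mem_primesLE.mpr ⟨(hQ p hp).2.2, (hQ p hp).1⟩)
        fun _ hp _ => (Nat.mem_primesLE.mp hp).2.one_lt.le
    _ ≤ 4 ^ n := primorial_le_four_pow n

theorem mul_card_le_of_log_eq {j : ℕ} {Q : Finset ℕ} (hQ : ∀ p ∈ Q, p.Prime ∧ Nat.log 2 p = j) :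
    j * #Q ≤ 2 ^ (j + 2) := by
  have h := pow_card_le_four_pow (a := 2 ^ j) (n := 2 ^ (j + 1)) fun p hp => by
    obtain ⟨hp, rfl⟩ := hQ p hp
    exact ⟨hp, Nat.pow_log_le_self 2 hp.ne_zero, (Nat.lt_pow_succ_log_self one_lt_two p).le⟩
  rw [← pow_mul, show (4 : ℕ) ^ 2 ^ (j + 1) = 2 ^ 2 ^ (j + 2) by
    rw [show (4 : ℕ) = 2 ^ 2 from rfl, ← pow_mul, pow_succ 2 (j + 1), mul_comm]] at h
  exact (Nat.pow_le_pow_iff_right one_lt_two).mp h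

theorem sum_rpow_neg_le_of_log_eq {σ : ℝ} (hσ : 0 ≤ σ) {j : ℕ} (hj : 1 ≤ j) {Q : Finset ℕ}
    (hQ : ∀ p ∈ Q, p.Prime ∧ Nat.log 2 p = j) :
    ∑ p ∈ Q, (p : ℝ) ^ (-σ) ≤ 4 * (2 ^ (1 - σ)) ^ j / j := by
  have h2j : (0 : ℝ) < 2 ^ j := by positivity
  have hterm : ∀ p ∈ Q, (p : ℝ) ^ (-σ) ≤ ((2 : ℝ) ^ j) ^ (-σ) := fun p hp => by
    obtain ⟨hp, rfl⟩ := hQ p hp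
    exact rpow_le_rpow_of_nonpos h2j (by exact_mod_cast Nat.pow_log_le_self 2 hp.ne_zero)
      (neg_nonpos.mpr hσ)
  have hcard : (j : ℝ) * #Q ≤ 4 * 2 ^ j := by
    exact_mod_cast (mul_card_le_of_log_eq hQ).trans_eq (by ring)
  have hj : (0 : ℝ) < j := by exact_mod_cast hj
  calc ∑ p ∈ Q, (p : ℝ) ^ (-σ) ≤ #Q * ((2 : ℝ) ^ j) ^ (-σ) := by
        simpa using sum_le_card_nsmul Q _ _ hterm
    _ ≤ 4 * 2 ^ j / j * ((2 : ℝ) ^ j) ^ (-σ) := by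
        gcongr; rw [le_div_iff₀ hj]; linarith
    _ = 4 * (2 ^ (1 - σ)) ^ j / j := by
        rw [rpow_pow_comm zero_le_two, sub_eq_add_neg, rpow_add h2j, rpow_one]; ring

theorem pow_succ_sub_one_le {r : ℝ} (hr : 1 ≤ r) (n : ℕ) :
    r ^ (n + 1) - 1 ≤ (n + 1) * (r - 1) * r ^ n := by
  have h := abs_pow_sub_pow_le r 1 (n + 1)
  rw [one_pow, abs_of_nonneg (by linarith [one_le_pow₀ (n := n + 1) hr]),
    abs_of_nonneg (by linarith), abs_of_nonneg (by linarith), abs_one, max_eq_left hr, Nat.add_sub_cancel, Nat.cast_succ] at h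
  linarith

theorem sum_Icc_pow_div_le {r : ℝ} (hr : 1 ≤ r) (J : ℕ) :
    ∑ j ∈ Icc 1 J, r ^ j / j ≤ log J + r ^ J := by
  have htel : ∑ j ∈ Icc 1 J, r ^ j / j ≤ ∑ j ∈ Icc 1 J, (j : ℝ)⁻¹ + (r ^ J - 1) := by
    induction J with
    | zero => simp
    | succ J ih =>
      rw [sum_Icc_succ_top (by omega), sum_Icc_succ_top (by omega)]
      have hJ : (0 : ℝ) < J + 1 := by positivity
      have hstep : r ^ (J + 1) / (J + 1) ≤ (J + 1 : ℝ)⁻¹ + (r ^ (J + 1) - r ^ J) := by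
        rw [div_le_iff₀ hJ, add_mul, inv_mul_cancel₀ hJ.ne']
        nlinarith [pow_succ_sub_one_le hr J, pow_succ r J]
      push_cast
      linarith
  have hharm : ∑ j ∈ Icc 1 J, (j : ℝ)⁻¹ ≤ 1 + log J := by
    simpa [harmonic_eq_sum_Icc] using harmonic_le_one_add_log J
  linarith

theorem sum_primesLE_rpow_neg_le {σ : ℝ} (hσ0 : 0 ≤ σ) (hσ1 : σ ≤ 1) {z : ℝ} (hz : 2 ≤ z) :
    ∑ p ∈ Nat.primesLE ⌊z⌋₊, (p : ℝ) ^ (-σ) ≤ 4 * (log (logb 2 z) + z ^ (1 - σ)) := by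
  set J := Nat.log 2 ⌊z⌋₊
  have hz2 : 2 ≤ ⌊z⌋₊ := Nat.le_floor (by exact_mod_cast hz)
  have hJ : 1 ≤ J := Nat.le_log_of_pow_le one_lt_two (by simpa using hz2)
  have h2J : (2 : ℝ) ^ J ≤ z :=
    (by exact_mod_cast Nat.pow_log_le_self 2 (by omega) : (2 : ℝ) ^ J ≤ ⌊z⌋₊).trans
      (Nat.floor_le (by linarith))
  have hmaps : ∀ p ∈ Nat.primesLE ⌊z⌋₊, Nat.log 2 p ∈ Icc 1 J := fun p hp => by
    obtain ⟨hpz, hp⟩ := Nat.mem_primesLE.mp hp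
    exact mem_Icc.mpr ⟨Nat.le_log_of_pow_le one_lt_two (by simpa using hp.two_le),
      Nat.log_mono_right hpz⟩
  have hr : 1 ≤ (2 : ℝ) ^ (1 - σ) := one_le_rpow one_le_two (by linarith)
  calc ∑ p ∈ Nat.primesLE ⌊z⌋₊, (p : ℝ) ^ (-σ)
        = ∑ j ∈ Icc 1 J, ∑ p ∈ Nat.primesLE ⌊z⌋₊ with Nat.log 2 p = j, (p : ℝ) ^ (-σ) :=
        (sum_fiberwise_of_maps_to hmaps _).symm
    _ ≤ ∑ j ∈ Icc 1 J, 4 * ((2 : ℝ) ^ (1 - σ)) ^ j / j := by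
        refine sum_le_sum fun j hj => sum_rpow_neg_le_of_log_eq hσ0 (mem_Icc.mp hj).1 fun p hp => ?_
        obtain ⟨hp, hpj⟩ := mem_filter.mp hp
        exact ⟨(Nat.mem_primesLE.mp hp).2, hpj⟩
    _ = 4 * ∑ j ∈ Icc 1 J, ((2 : ℝ) ^ (1 - σ)) ^ j / j := by simp only [mul_sum, mul_div_assoc]
    _ ≤ 4 * (log J + ((2 : ℝ) ^ (1 - σ)) ^ J) := by gcongr; exact sum_Icc_pow_div_le hr J
    _ ≤ 4 * (log (logb 2 z) + z ^ (1 - σ)) := by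
        rw [rpow_pow_comm zero_le_two]
        gcongr
        rw [le_logb_iff_rpow_le one_lt_two (by linarith), rpow_natCast]
        exact h2J

/-- `Ψ(x, z)`. -/
noncomputable def smoothCount (x z : ℝ) : ℕ :=
  #((Icc 1 ⌊x⌋₊).filter fun n : ℕ => ∀ p ∈ n.primeFactors, (p : ℝ) ≤ z)

theorem smoothCount_le_self {x : ℝ} (hx : 0 ≤ x) (z : ℝ) : (smoothCount x z : ℝ) ≤ x :=
  calc (smoothCount x z : ℝ) ≤ #(Icc 1 ⌊x⌋₊) := by exact_mod_cast card_filter_le _ _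
    _ ≤ x := by simpa using Nat.floor_le hx

theorem smoothCount_le_rpow_mul_exp {x z σ : ℝ} (hx : 0 ≤ x) (hz : 2 ≤ z) (hσ0 : 1 / 2 ≤ σ)
    (hσ1 : σ ≤ 1) :
    (smoothCount x z : ℝ) ≤ x ^ σ * exp (16 * (log (logb 2 z) + z ^ (1 - σ))) := by
  set S := (Icc 1 ⌊x⌋₊).filter fun n : ℕ => ∀ p ∈ n.primeFactors, (p : ℝ) ≤ z
  have hS : ∀ n ∈ S, 0 < n ∧ (n : ℝ) ≤ x := fun n hn => by
    obtain ⟨hn1, hnx⟩ := mem_Icc.mp (mem_filter.mp hn).1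
    exact ⟨hn1, (Nat.le_floor_iff' (by omega)).mp hnx⟩
  have hsmooth : ∀ n ∈ S, n ∈ (⌊z⌋₊ + 1).smoothNumbers := fun n hn => by
    obtain ⟨hn, hnz⟩ := mem_filter.mp hn
    refine Nat.mem_smoothNumbers_iff_primeFactors_subset.mpr ⟨Nat.one_le_iff_ne_zero.mp (mem_Icc.mp hn).1, fun p hp => ?_⟩
    exact Nat.mem_primesLE.mpr ⟨Nat.le_floor (hnz p hp), Nat.prime_of_mem_primeFactors hp⟩
  have hsmall : ∀ p ∈ Nat.primesLE ⌊z⌋₊, (p : ℝ) ^ (-σ) ≤ 3 / 4 := fun p hp => by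
    have hp : (2 : ℝ) ≤ p := by exact_mod_cast (Nat.mem_primesLE.mp hp).2.two_le
    calc (p : ℝ) ^ (-σ) ≤ 2 ^ (-σ) := rpow_le_rpow_of_nonpos two_pos hp (by linarith)
      _ ≤ 2 ^ (-(1 / 2) : ℝ) := rpow_le_rpow_of_exponent_le one_le_two (by linarith)
      _ = (√2)⁻¹ := by rw [rpow_neg zero_le_two, sqrt_eq_rpow]
      _ ≤ 3 / 4 := by
          rw [inv_le_comm₀ (by positivity) (by norm_num), le_sqrt (by norm_num) zero_le_two]
          norm_num
  calc (#S : ℝ) ≤ x ^ σ * ∑ n ∈ S, (n : ℝ) ^ (-σ) :=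
        card_le_rpow_mul_sum_rpow_neg (by linarith) hS
    _ ≤ x ^ σ * ∏ p ∈ Nat.primesLE ⌊z⌋₊, (1 - (p : ℝ) ^ (-σ))⁻¹ := by
        gcongr; exact sum_rpow_neg_le_prod_primesBelow (by linarith) hsmooth
    _ ≤ x ^ σ * exp (4 * ∑ p ∈ Nat.primesLE ⌊z⌋₊, (p : ℝ) ^ (-σ)) := by
        gcongr
        exact prod_inv_one_sub_le_exp_sum (fun p _ => rpow_nonneg p.cast_nonneg _) hsmall
    _ ≤ x ^ σ * exp (16 * (log (logb 2 z) + z ^ (1 - σ))) := by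
        gcongr x ^ σ * exp ?_
        linarith [sum_primesLE_rpow_neg_le (by linarith) hσ1 hz]

theorem two_mul_sq_le_exp {u : ℝ} (hu : 12 ≤ u) : 2 * u ^ 2 ≤ exp u := by
  have h := Real.pow_div_factorial_le_exp u (by linarith) 3
  norm_num [Nat.factorial] at h
  nlinarith

theorem smoothCount_le_div_log_rpow_of_large {x : ℝ} (hx : 1 < x) (hu : 16 ≤ log (log x)) :
    (smoothCount x (x ^ (1 / log (log x))) : ℝ) ≤ x / log x ^ (log (log (log x)) - 32) := by
  set L := log x
  set u := log L
  have hL : 0 < L := log_pos hx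
  have hLu : L = exp u := (exp_log hL).symm
  have hlogu : 0 ≤ log u ∧ log u ≤ u :=
    ⟨log_nonneg (by linarith), by linarith [log_le_sub_one_of_pos (by linarith : 0 < u)]⟩
  have hsq := two_mul_sq_le_exp (by linarith : 12 ≤ u)
  set z := x ^ (1 / u)
  have hlogz : log z = L / u := by rw [log_rpow (by linarith), one_div_mul_eq_div]
  have hlogz_pos : 0 < log z := by rw [hlogz]; positivity
  set σ := 1 - log u / log z
  have hzσ : z ^ (1 - σ) = u := by
    rw [rpow_def_of_pos (by positivity), sub_sub_cancel, mul_div_cancel₀ _ hlogz_pos.ne',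
      exp_log (by linarith)]
  have hσ_half : 1 / 2 ≤ σ := by
    have : log u / log z ≤ 1 / 2 := by
      rw [hlogz, div_div_eq_mul_div, div_le_iff₀ hL, hLu]; nlinarith
    linarith
  have hσ_le : σ ≤ 1 := by linarith [div_nonneg hlogu.1 hlogz_pos.le]
  have hz : 2 ≤ z := by
    have : 1 ≤ log z := by rw [hlogz, le_div_iff₀ (by linarith), hLu]; nlinarith
    linarith [add_one_le_exp (log z), exp_log (by positivity : 0 < z)]
  have hloglogb : log (logb 2 z) ≤ u := by
    refine log_le_log (div_pos hlogz_pos (log_pos one_lt_two)) ?_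
    have h1 : 1 ≤ u * log 2 := by nlinarith [log_two_gt_d9]
    rw [logb, hlogz, div_div, div_le_iff₀ (by positivity)]
    nlinarith
  calc (smoothCount x z : ℝ) ≤ x ^ σ * exp (16 * (log (logb 2 z) + z ^ (1 - σ))) :=
        smoothCount_le_rpow_mul_exp (by linarith) hz hσ_half hσ_le
    _ ≤ x ^ σ * exp (16 * (u + u)) := by rw [hzσ]; gcongr
    _ = x / L ^ (log u - 32) := by
        rw [rpow_def_of_pos (by linarith), rpow_def_of_pos hL, eq_div_iff (exp_pos _).ne',
          mul_assoc, ← exp_add, ← exp_add]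
        have hLσ : L * σ = L - u * log u := by
          simp only [σ, hlogz]; field_simp
        rw [hLσ]
        convert exp_log (by linarith : 0 < x) using 2
        ring

theorem smoothCount_le_div_log_rpow {x : ℝ} (hx : 3 ≤ x) :
    (smoothCount x (x ^ (1 / log (log x))) : ℝ) ≤ x / log x ^ (log (log (log x)) - 32) := by
  have hlog : 1 < log x := by
    rw [lt_log_iff_exp_lt (by linarith)]; linarith [exp_one_lt_d9]
  by_cases hsmall : log (log (log x)) ≤ 32
  · calc (smoothCount x _ : ℝ) ≤ x := smoothCount_le_self (by linarith) _
      _ ≤ x / log x ^ (log (log (log x)) - 32) :=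
        le_div_self (by linarith) (by positivity)
          (rpow_le_one_of_one_le_of_nonpos hlog.le (by linarith))
  · have hu : exp 32 < log (log x) :=
      (lt_log_iff_exp_lt (log_pos hlog)).mp (by linarith)
    exact smoothCount_le_div_log_rpow_of_large (by linarith) (by linarith [add_one_le_exp 32])

/-- With `z = x^{1/log log x}`, the count `Ψ(x,z)` of `z`-smooth numbers up to `x`
satisfies `Ψ(x,z) ≪ x/(log x)^{(1+o(1)) log log log x}` as `x → ∞`. -/
theorem stmt_17 :
    ∃ C > (0 : ℝ), ∃ o : ℝ → ℝ, Tendsto o atTop (nhds 0) ∧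
      ∀ x : ℝ, 3 ≤ x →
        (((Finset.Icc 1 ⌊x⌋₊).filter
            (fun n : ℕ => ∀ p ∈ n.primeFactors,
              (p : ℝ) ≤ x ^ (1 / Real.log (Real.log x)))).card : ℝ) ≤
          C * x / (Real.log x) ^ ((1 + o x) * Real.log (Real.log (Real.log x))) := by
  refine ⟨1, one_pos, fun x => -32 / log (log (log x)), ?_, fun x hx => ?_⟩
  · exact tendsto_const_nhds.div_atTop
      (tendsto_log_atTop.comp (tendsto_log_atTop.comp tendsto_log_atTop))
  change (smoothCount x _ : ℝ) ≤ _
  rw [one_mul]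
  by_cases h0 : log (log (log x)) = 0
  · simpa [h0] using smoothCount_le_self (by linarith) _
  · rw [show (1 + -32 / log (log (log x))) * log (log (log x)) = log (log (log x)) - 32 by
      field_simp; ring]
    exact smoothCount_le_div_log_rpow hx
end
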